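/- arXiv:2511.06180 — 2 statements merged into one kernel-verified Lean document; each statement's English description precedes it below -/
import Mathlib

section
/- Let G be an invertible symmetric real n×n matrix and N a real n×q matrix such that NᵀG⁻¹N is negative definite, and let H = G⁻¹ − G⁻¹N(NᵀG⁻¹N)⁻¹NᵀG⁻¹. If a vector n ∈ ℝⁿ satisfies nᵀH n < 0, then the augmented matrix N₊ = [N n] satisfies that N₊ᵀG⁻¹N₊ is negative definite. -/
/-! Write `S = -G⁻¹`, a symmetric matrix. Then `-N₊ᵀG⁻¹N₊ = N₊ᵀ S N₊` is a 2 × 2 block matrix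
whose upper-left block `NᵀSN` is positive definite, and its Schur complement is the 1 × 1 matrix
`nᵀ(S - SN(NᵀSN)⁻¹NᵀS)n = -nᵀHn > 0`. A Hermitian block matrix with positive definite corner is
positive definite exactly when its Schur complement is: it is positive semidefinite by the
semidefinite Schur criterion, and nonsingular since its determinant is the product of the
determinants of the corner and of the Schur complement. -/

open Matrix

namespace Matrix

section Blocks

variable {R : Type*} [Semiring R] [StarRing R] {n m p : Type*} [Fintype n]

theorem conjTranspose_fromCols_mul_mul_fromCols (S : Matrix n n R) (N : Matrix n m R)
    (W : Matrix n p R) :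
    (fromCols N W)ᴴ * S * fromCols N W =
      fromBlocks (Nᴴ * S * N) (Nᴴ * S * W) (Wᴴ * S * N) (Wᴴ * S * W) := by
  rw [conjTranspose_fromCols_eq_fromRows_conjTranspose, fromRows_mul, fromRows_mul_fromCols]

end Blocks

open scoped ComplexOrder

variable {𝕜 : Type*} [RCLike 𝕜] {n m p : Type*} [Fintype n] [Fintype m] [Fintype p]
  [DecidableEq m] [DecidableEq p]

theorem PosDef.posDef_fromBlocks₁₁_iff {A : Matrix m m 𝕜} (B : Matrix m p 𝕜) (D : Matrix p p 𝕜)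
    (hA : A.PosDef) [Invertible A] :
    (fromBlocks A B Bᴴ D).PosDef ↔ (D - Bᴴ * A⁻¹ * B).PosDef := by
  have hdet : (fromBlocks A B Bᴴ D).det = A.det * (D - Bᴴ * A⁻¹ * B).det := by
    rw [det_fromBlocks₁₁, invOf_eq_nonsing_inv]
  constructor
  · intro h
    rw [((hA.fromBlocks₁₁ B D).mp h.posSemidef).posDef_iff_det_ne_zero]
    exact right_ne_zero_of_mul (hdet ▸ h.det_pos.ne')
  · intro h
    rw [((hA.fromBlocks₁₁ B D).mpr h.posSemidef).posDef_iff_det_ne_zero, hdet]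
    exact mul_ne_zero hA.det_pos.ne' h.det_pos.ne'

theorem posDef_conjTranspose_fromCols_mul_mul_fromCols_iff {S : Matrix n n 𝕜}
    (hS : S.IsHermitian) {N : Matrix n m 𝕜} (W : Matrix n p 𝕜) (hN : (Nᴴ * S * N).PosDef) :
    ((fromCols N W)ᴴ * S * fromCols N W).PosDef ↔
      (Wᴴ * (S - S * N * (Nᴴ * S * N)⁻¹ * Nᴴ * S) * W).PosDef := by
  have : Invertible (Nᴴ * S * N) := hN.isUnit.invertible
  have hcross : Wᴴ * S * N = (Nᴴ * S * W)ᴴ := by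
    simp only [conjTranspose_mul, conjTranspose_conjTranspose, hS.eq, Matrix.mul_assoc]
  rw [conjTranspose_fromCols_mul_mul_fromCols, hcross, hN.posDef_fromBlocks₁₁_iff]
  simp only [conjTranspose_mul, conjTranspose_conjTranspose, hS.eq, Matrix.mul_sub,
    Matrix.sub_mul, Matrix.mul_assoc]

theorem posDef_conjTranspose_replicateCol_mul_mul_replicateCol_iff {ι : Type*} [Unique ι]
    (P : Matrix n n 𝕜) (w : n → 𝕜) :
    ((replicateCol ι w)ᴴ * P * replicateCol ι w).PosDef ↔ 0 < star w ⬝ᵥ P *ᵥ w := by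
  have hconst : (of fun _ _ => star w ⬝ᵥ P *ᵥ w : Matrix ι ι 𝕜) =
      diagonal fun _ => star w ⬝ᵥ P *ᵥ w := by
    ext i j
    simp only [Subsingleton.elim i j, of_apply, diagonal_apply_eq]
  rw [conjTranspose_replicateCol, Matrix.mul_assoc, ← replicateCol_mulVec,
    replicateRow_mul_replicateCol, hconst, posDef_diagonal_iff]
  simp

end Matrix

theorem stmt_9_general {n q : ℕ} (G : Matrix (Fin n) (Fin n) ℝ)
    (hGsym : G.IsSymm)
    (N : Matrix (Fin n) (Fin q) ℝ)
    (hnd : (-(Nᵀ * G⁻¹ * N)).PosDef)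
    (H : Matrix (Fin n) (Fin n) ℝ)
    (hH : H = G⁻¹ - G⁻¹ * N * (Nᵀ * G⁻¹ * N)⁻¹ * Nᵀ * G⁻¹)
    (v : Fin n → ℝ) (hv : v ⬝ᵥ H *ᵥ v < 0)
    (Nplus : Matrix (Fin n) (Fin q ⊕ Unit) ℝ)
    (hNplus : Nplus = Matrix.fromCols N (Matrix.replicateCol Unit v)) :
    (-(Nplusᵀ * G⁻¹ * Nplus)).PosDef := by
  subst hNplus hH
  set M := fromCols N (replicateCol Unit v)
  have hS : (-G⁻¹).IsHermitian := by
    rw [IsHermitian, conjTranspose_eq_transpose_of_trivial]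
    exact hGsym.inv.neg
  have hN : (Nᴴ * -G⁻¹ * N).PosDef := by
    simpa [conjTranspose_eq_transpose_of_trivial] using hnd
  have hnegInv : (-(Nᵀ * G⁻¹ * N))⁻¹ = -(Nᵀ * G⁻¹ * N)⁻¹ := by
    have hA : IsUnit (Nᵀ * G⁻¹ * N).det := by
      simpa [isUnit_iff_isUnit_det] using hnd.isUnit
    exact inv_eq_left_inv (by simp [nonsing_inv_mul _ hA])
  have hM : -(Mᵀ * G⁻¹ * M) = Mᴴ * -G⁻¹ * M := by
    simp [conjTranspose_eq_transpose_of_trivial]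
  rw [hM, posDef_conjTranspose_fromCols_mul_mul_fromCols_iff hS _ hN,
    posDef_conjTranspose_replicateCol_mul_mul_replicateCol_iff]
  have hschur : -G⁻¹ - -G⁻¹ * N * (Nᴴ * -G⁻¹ * N)⁻¹ * Nᴴ * -G⁻¹ =
      -(G⁻¹ - G⁻¹ * N * (Nᵀ * G⁻¹ * N)⁻¹ * Nᵀ * G⁻¹) := by
    simp [conjTranspose_eq_transpose_of_trivial, hnegInv, neg_add_eq_sub]
  rw [hschur, neg_mulVec, dotProduct_neg, star_trivial]
  exact neg_pos.mpr hv

/-- If `NᵀG⁻¹N` is negative definite and `nᵀH n < 0`, then the augmented matrix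
`N₊ = [N n]` also has `N₊ᵀG⁻¹N₊` negative definite. -/
theorem stmt_9 {n q : ℕ} (G : Matrix (Fin n) (Fin n) ℝ)
    (hGsym : G.IsSymm) (hG : IsUnit G.det)
    (N : Matrix (Fin n) (Fin q) ℝ)
    (hnd : (-(Nᵀ * G⁻¹ * N)).PosDef)
    (H : Matrix (Fin n) (Fin n) ℝ)
    (hH : H = G⁻¹ - G⁻¹ * N * (Nᵀ * G⁻¹ * N)⁻¹ * Nᵀ * G⁻¹)
    (v : Fin n → ℝ) (hv : v ⬝ᵥ H *ᵥ v < 0)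
    (Nplus : Matrix (Fin n) (Fin q ⊕ Unit) ℝ)
    (hNplus : Nplus = Matrix.fromCols N (Matrix.replicateCol Unit v)) :
    (-(Nplusᵀ * G⁻¹ * Nplus)).PosDef :=
  stmt_9_general G hGsym N hnd H hH v hv Nplus hNplus
end

section
/- Let G = [[G₁₁, G₁₂],[G₁₂ᵀ, G₂₂]] be an invertible symmetric block matrix with G₂₂ symmetric negative definite. Let D = [A B], let α ⊆ {1,…,m} be an index set such that B_α has full row rank and such that N_α := D_αᵀ has N_αᵀG⁻¹N_α invertible, let H_α = G⁻¹ − G⁻¹N_α(N_αᵀG⁻¹N_α)⁻¹N_αᵀG⁻¹, and assume Γ_α = G₁₁ − [G₁₂ A_αᵀ]·[[G₂₂, B_αᵀ],[B_α, 0]]⁻¹·[G₁₂ᵀ; A_α] is positive definite. Let p ∈ {1,…,m} and n_p = D_pᵀ = (A_pᵀ, B_pᵀ). Then: (a) if n_p is a linear combination of the columns of N_α, then n_pᵀH_α n_p = 0; (b) if the row B_p is a linear combination of the rows of B_α, then n_pᵀH_α n_p ≥ 0. -/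
open Matrix

/-!
Both parts rest on the two identities `H_α N_α = 0` and `N_αᵀ H_α = 0`. Part (a) is immediate.
For (b), write `n_p = (u, 0) + N_α β` with `u = A_p - A_αᵀ β`; the quadratic form only sees
`(u, 0)`, and `H_α (u, 0)` is the primal part `z` of a solution of the KKT system
`G z + N_α c = (u, 0)`, `N_αᵀ z = 0`. Eliminating the `y`-block and the multipliers through the
bordered matrix `[[G₂₂, B_αᵀ], [B_α, 0]]` (invertible since `G₂₂ ≺ 0` and `B_α` has full row rank)
leaves `Γ_α x = u` for the `x`-block of `z`, so the value is `u ⬝ Γ_α⁻¹ u ≥ 0`.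
-/

section ConstrainedInverse

variable {ι κ R : Type*} [Fintype ι] [DecidableEq ι] [Fintype κ] [DecidableEq κ] [CommRing R]

/-- The upper-left block of the inverse of the KKT matrix `[[G, N], [Nᵀ, 0]]`. -/
noncomputable def constrainedInv (G : Matrix ι ι R) (N : Matrix ι κ R) : Matrix ι ι R :=
  G⁻¹ - G⁻¹ * N * (Nᵀ * G⁻¹ * N)⁻¹ * Nᵀ * G⁻¹

variable {G : Matrix ι ι R} {N : Matrix ι κ R}

theorem constrainedInv_mul_self (hS : IsUnit (Nᵀ * G⁻¹ * N).det) :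
    constrainedInv G N * N = 0 := by
  calc constrainedInv G N * N
      = G⁻¹ * N - G⁻¹ * N * ((Nᵀ * G⁻¹ * N)⁻¹ * (Nᵀ * G⁻¹ * N)) := by
        simp only [constrainedInv, Matrix.sub_mul, Matrix.mul_assoc]
    _ = 0 := by rw [nonsing_inv_mul _ hS, Matrix.mul_one, sub_self]

theorem transpose_mul_constrainedInv (hS : IsUnit (Nᵀ * G⁻¹ * N).det) :
    Nᵀ * constrainedInv G N = 0 := by
  calc Nᵀ * constrainedInv G N
      = Nᵀ * G⁻¹ - (Nᵀ * G⁻¹ * N) * (Nᵀ * G⁻¹ * N)⁻¹ * (Nᵀ * G⁻¹) := by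
        simp only [constrainedInv, Matrix.mul_sub, Matrix.mul_assoc]
    _ = 0 := by rw [mul_nonsing_inv _ hS, Matrix.one_mul, sub_self]

theorem constrainedInv_mulVec_mulVec (hS : IsUnit (Nᵀ * G⁻¹ * N).det) (β : κ → R) :
    constrainedInv G N *ᵥ (N *ᵥ β) = 0 := by
  rw [mulVec_mulVec, constrainedInv_mul_self hS, zero_mulVec]

theorem dotProduct_constrainedInv_mulVec_add_mulVec (hS : IsUnit (Nᵀ * G⁻¹ * N).det)
    (v : ι → R) (β : κ → R) :
    (v + N *ᵥ β) ⬝ᵥ constrainedInv G N *ᵥ (v + N *ᵥ β) = v ⬝ᵥ constrainedInv G N *ᵥ v := by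
  have hleft : (N *ᵥ β) ⬝ᵥ constrainedInv G N *ᵥ v = 0 := by
    rw [dotProduct_comm, dotProduct_mulVec, ← mulVec_transpose, mulVec_mulVec,
      transpose_mul_constrainedInv hS, zero_mulVec, zero_dotProduct]
  rw [mulVec_add, constrainedInv_mulVec_mulVec hS, add_zero, add_dotProduct, hleft, add_zero]

theorem constrainedInv_mulVec_of_kkt (hG : IsUnit G.det) (hS : IsUnit (Nᵀ * G⁻¹ * N).det)
    {v z : ι → R} {c : κ → R} (hstat : G *ᵥ z + N *ᵥ c = v) (hfeas : Nᵀ *ᵥ z = 0) :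
    constrainedInv G N *ᵥ v = z := by
  have hHG : constrainedInv G N * G = 1 - G⁻¹ * N * (Nᵀ * G⁻¹ * N)⁻¹ * Nᵀ := by
    simp only [constrainedInv, Matrix.sub_mul, Matrix.mul_assoc, nonsing_inv_mul _ hG,
      Matrix.mul_one]
  rw [← hstat, mulVec_add, constrainedInv_mulVec_mulVec hS, add_zero, mulVec_mulVec, hHG,
    sub_mulVec, one_mulVec, ← mulVec_mulVec, hfeas, mulVec_zero, sub_zero]

end ConstrainedInverse

section Bordered

variable {m n κ : Type*} [Fintype m] [DecidableEq m] [Fintype n] [Fintype κ] [DecidableEq κ]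

theorem isUnit_det_fromBlocks_transpose_zero {G : Matrix m m ℝ} {B : Matrix κ m ℝ}
    (hG : (-G).PosDef) (hB : LinearIndependent ℝ B.row) :
    IsUnit (fromBlocks G Bᵀ B 0).det := by
  have hGdet : IsUnit G.det := by
    simpa [det_neg, isUnit_iff_ne_zero] using hG.det_pos.ne'
  let := G.invertibleOfIsUnitDet hGdet
  have hneg : (-G)⁻¹ = -G⁻¹ := inv_eq_right_inv (by rw [neg_mul_neg, mul_nonsing_inv _ hGdet])
  have hschur : (0 : Matrix κ κ ℝ) - B * ⅟G * Bᵀ = B * (-G)⁻¹ * Bᴴ := by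
    rw [hneg, invOf_eq_nonsing_inv, conjTranspose_eq_transpose_of_trivial]
    simp only [Matrix.mul_neg, Matrix.neg_mul, zero_sub]
  have hpd : (B * (-G)⁻¹ * Bᴴ).PosDef :=
    hG.inv.mul_mul_conjTranspose_same (vecMul_injective_iff.mpr hB)
  rw [det_fromBlocks₁₁, hschur]
  exact hGdet.mul (isUnit_iff_ne_zero.mpr hpd.det_pos.ne')

theorem exists_kkt_solution_schur (G₁₁ : Matrix n n ℝ) (G₁₂ : Matrix n m ℝ)
    (G₂₂ : Matrix m m ℝ) (A : Matrix κ n ℝ) (B : Matrix κ m ℝ)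
    (hM : IsUnit (fromBlocks G₂₂ Bᵀ B 0).det) (x : n → ℝ) :
    ∃ (y : m → ℝ) (c : κ → ℝ),
      fromBlocks G₁₁ G₁₂ G₁₂ᵀ G₂₂ *ᵥ Sum.elim x y + (fromCols A B)ᵀ *ᵥ c =
        Sum.elim ((G₁₁ - fromCols G₁₂ Aᵀ * (fromBlocks G₂₂ Bᵀ B 0)⁻¹ * fromRows G₁₂ᵀ A) *ᵥ x) 0
      ∧ fromCols A B *ᵥ Sum.elim x y = 0 := by
  set M := fromBlocks G₂₂ Bᵀ B 0
  obtain ⟨w₁, w₂, hw⟩ : ∃ w₁ w₂, M⁻¹ *ᵥ (fromRows G₁₂ᵀ A *ᵥ x) = Sum.elim w₁ w₂ :=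
    ⟨_, _, (Sum.elim_comp_inl_inr _).symm⟩
  have hMw : M *ᵥ Sum.elim w₁ w₂ = fromRows G₁₂ᵀ A *ᵥ x := by
    rw [← hw, mulVec_mulVec, mul_nonsing_inv _ hM, one_mulVec]
  simp only [M, fromBlocks_mulVec, fromRows_mulVec, Sum.elim_comp_inl, Sum.elim_comp_inr,
    zero_mulVec, add_zero, Sum.elim_eq_iff] at hMw
  have hΓx : (G₁₁ - fromCols G₁₂ Aᵀ * M⁻¹ * fromRows G₁₂ᵀ A) *ᵥ x =
      G₁₁ *ᵥ x - (G₁₂ *ᵥ w₁ + Aᵀ *ᵥ w₂) := by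
    rw [sub_mulVec, ← mulVec_mulVec, ← mulVec_mulVec, hw, fromCols_mulVec_sumElim]
  refine ⟨-w₁, -w₂, ?_, ?_⟩
  · rw [hΓx, fromBlocks_mulVec, transpose_fromCols, fromRows_mulVec]
    simp only [Sum.elim_comp_inl, Sum.elim_comp_inr, ← Sum.elim_add_add, mulVec_neg,
      Sum.elim_eq_iff]
    exact ⟨by abel, by linear_combination -hMw.1⟩
  · rw [fromCols_mulVec_sumElim, mulVec_neg, hMw.2, add_neg_cancel]

end Bordered

theorem stmt_11_general {nx ny q : ℕ}
    (G11 : Matrix (Fin nx) (Fin nx) ℝ) (G12 : Matrix (Fin nx) (Fin ny) ℝ)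
    (G22 : Matrix (Fin ny) (Fin ny) ℝ)
    (hG22nd : (-G22).PosDef)
    (G : Matrix (Fin nx ⊕ Fin ny) (Fin nx ⊕ Fin ny) ℝ)
    (hG : G = Matrix.fromBlocks G11 G12 G12ᵀ G22)
    (hGinv : IsUnit G.det)
    (Aα : Matrix (Fin q) (Fin nx) ℝ) (Bα : Matrix (Fin q) (Fin ny) ℝ)
    (hBα : LinearIndependent ℝ (fun i : Fin q => Bα i))
    (Nα : Matrix (Fin nx ⊕ Fin ny) (Fin q) ℝ)
    (hNα : Nα = (Matrix.fromCols Aα Bα)ᵀ)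
    (hNGN : IsUnit (Nαᵀ * G⁻¹ * Nα).det)
    (Hα : Matrix (Fin nx ⊕ Fin ny) (Fin nx ⊕ Fin ny) ℝ)
    (hHα : Hα = G⁻¹ - G⁻¹ * Nα * (Nαᵀ * G⁻¹ * Nα)⁻¹ * Nαᵀ * G⁻¹)
    (Γα : Matrix (Fin nx) (Fin nx) ℝ)
    (hΓα : Γα = G11 - Matrix.fromCols G12 Aαᵀ *
      (Matrix.fromBlocks G22 Bαᵀ Bα 0)⁻¹ * Matrix.fromRows G12ᵀ Aα)
    (hΓpd : Γα.PosDef)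
    (Ap : Fin nx → ℝ) (Bp : Fin ny → ℝ)
    (np : Fin nx ⊕ Fin ny → ℝ) (hnp : np = Sum.elim Ap Bp) :
    ((∃ β : Fin q → ℝ, np = Nα *ᵥ β) → np ⬝ᵥ Hα *ᵥ np = 0) ∧
    ((∃ β : Fin q → ℝ, Bp = Bαᵀ *ᵥ β) → 0 ≤ np ⬝ᵥ Hα *ᵥ np) := by
  change Hα = constrainedInv G Nα at hHα
  subst hHα
  refine ⟨fun ⟨β, hβ⟩ => ?_, fun ⟨β, hBp⟩ => ?_⟩
  · rw [hβ, constrainedInv_mulVec_mulVec hNGN, dotProduct_zero]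
  set u := Ap - Aαᵀ *ᵥ β
  have hsplit : np = Sum.elim u 0 + Nα *ᵥ β := by
    rw [hnp, hNα, transpose_fromCols, fromRows_mulVec, ← Sum.elim_add_add, hBp, zero_add,
      sub_add_cancel]
  obtain ⟨y, c, hstat, hfeas⟩ := exists_kkt_solution_schur G11 G12 G22 Aα Bα
    (isUnit_det_fromBlocks_transpose_zero hG22nd hBα) (Γα⁻¹ *ᵥ u)
  rw [← hΓα, mulVec_mulVec, mul_nonsing_inv _ (isUnit_iff_ne_zero.mpr hΓpd.det_pos.ne'),
    one_mulVec, ← hG, ← hNα] at hstat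
  rw [← transpose_transpose (fromCols Aα Bα), ← hNα] at hfeas
  rw [hsplit, dotProduct_constrainedInv_mulVec_add_mulVec hNGN,
    constrainedInv_mulVec_of_kkt hGinv hNGN hstat hfeas, sumElim_dotProduct_sumElim,
    zero_dotProduct, add_zero]
  simpa using hΓpd.inv.posSemidef.dotProduct_mulVec_nonneg u

/-- Two sufficient conditions for `n_pᵀ H_α n_p` to be (non-)negative: if `n_p` lies in
the column span of `N_α` then the value is zero; if the row `B_p` lies in the row span
of `B_α` then the value is nonnegative. -/
theorem stmt_11 {nx ny q : ℕ}
    (G11 : Matrix (Fin nx) (Fin nx) ℝ) (G12 : Matrix (Fin nx) (Fin ny) ℝ)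
    (G22 : Matrix (Fin ny) (Fin ny) ℝ)
    (hG11 : G11.IsSymm) (hG22 : G22.IsSymm) (hG22nd : (-G22).PosDef)
    (G : Matrix (Fin nx ⊕ Fin ny) (Fin nx ⊕ Fin ny) ℝ)
    (hG : G = Matrix.fromBlocks G11 G12 G12ᵀ G22)
    (hGinv : IsUnit G.det)
    (Aα : Matrix (Fin q) (Fin nx) ℝ) (Bα : Matrix (Fin q) (Fin ny) ℝ)
    (hBα : LinearIndependent ℝ (fun i : Fin q => Bα i))
    (Nα : Matrix (Fin nx ⊕ Fin ny) (Fin q) ℝ)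
    (hNα : Nα = (Matrix.fromCols Aα Bα)ᵀ)
    (hNGN : IsUnit (Nαᵀ * G⁻¹ * Nα).det)
    (Hα : Matrix (Fin nx ⊕ Fin ny) (Fin nx ⊕ Fin ny) ℝ)
    (hHα : Hα = G⁻¹ - G⁻¹ * Nα * (Nαᵀ * G⁻¹ * Nα)⁻¹ * Nαᵀ * G⁻¹)
    (Γα : Matrix (Fin nx) (Fin nx) ℝ)
    (hΓα : Γα = G11 - Matrix.fromCols G12 Aαᵀ *
      (Matrix.fromBlocks G22 Bαᵀ Bα 0)⁻¹ * Matrix.fromRows G12ᵀ Aα)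
    (hΓpd : Γα.PosDef)
    (Ap : Fin nx → ℝ) (Bp : Fin ny → ℝ)
    (np : Fin nx ⊕ Fin ny → ℝ) (hnp : np = Sum.elim Ap Bp) :
    ((∃ β : Fin q → ℝ, np = Nα *ᵥ β) → np ⬝ᵥ Hα *ᵥ np = 0) ∧
    ((∃ β : Fin q → ℝ, Bp = Bαᵀ *ᵥ β) → 0 ≤ np ⬝ᵥ Hα *ᵥ np) :=
  stmt_11_general G11 G12 G22 hG22nd G hG hGinv Aα Bα hBα Nα hNα hNGN Hα hHα Γα hΓα hΓpd Ap Bp np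
    hnp
end
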